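/- Let Δ be a connected triangular configuration embedded into ℝ³ and let t be a triangle of Δ. Then t is incident with exactly two cells of Δ. -/

import Mathlib

open scoped Classical
noncomputable section

/-- Points of `ℝ^d`. -/
abbrev Pt (d : ℕ) : Type := EuclideanSpace ℝ (Fin d)

/-- A triangular configuration embedded into `ℝ^d`: a finite geometric simplicial
complex each of whose faces has at most 3 vertices. -/
structure TriangularConfiguration (d : ℕ) where
  faces : Finset (Finset (Pt d))
  not_empty_mem : ∅ ∉ faces
  indep : ∀ s ∈ faces, AffineIndependent ℝ ((↑) : s → Pt d)
  down_closed : ∀ s ∈ faces, ∀ u ⊆ s, u ≠ ∅ → u ∈ faces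
  inter_subset_convexHull : ∀ s ∈ faces, ∀ u ∈ faces,
    convexHull ℝ (s : Set (Pt d)) ∩ convexHull ℝ (u : Set (Pt d)) ⊆
      convexHull ℝ ((s ∩ u : Finset (Pt d)) : Set (Pt d))
  card_le : ∀ s ∈ faces, s.card ≤ 3

namespace TriangularConfiguration

variable {d : ℕ}

/-- The triangles (2-dimensional faces) of a triangular configuration. -/
def triangles (Δ : TriangularConfiguration d) : Finset (Finset (Pt d)) :=
  Δ.faces.filter fun s => s.card = 3

/-- The edges (1-dimensional faces) of a triangular configuration. -/
def edges (Δ : TriangularConfiguration d) : Finset (Finset (Pt d)) :=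
  Δ.faces.filter fun s => s.card = 2

/-- The type of triangles of `Δ`. -/
abbrev Tri (Δ : TriangularConfiguration d) : Type := {t : Finset (Pt d) // t ∈ Δ.triangles}

/-- The cycle space of `Δ` over `GF(2)`: the kernel of the edge–triangle incidence
matrix of `Δ`. -/
def cycleSpace (Δ : TriangularConfiguration d) : Submodule (ZMod 2) (Δ.Tri → ZMod 2) where
  carrier := {x | ∀ e ∈ Δ.edges, (∑ t : Δ.Tri, if e ⊆ t.1 then x t else 0) = 0}
  zero_mem' := by intro e _; simp
  add_mem' := by
    intro a b ha hb e he
    have h : (∑ t : Δ.Tri, if e ⊆ t.1 then (a + b) t else 0)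
        = (∑ t : Δ.Tri, if e ⊆ t.1 then a t else 0)
          + (∑ t : Δ.Tri, if e ⊆ t.1 then b t else 0) := by
      rw [← Finset.sum_add_distrib]
      refine Finset.sum_congr rfl fun t _ => ?_
      by_cases h : e ⊆ t.1 <;> simp [h]
    rw [h, ha e he, hb e he, add_zero]
  smul_mem' := by
    intro c x hx e he
    have h : (∑ t : Δ.Tri, if e ⊆ t.1 then (c • x) t else 0)
        = c * ∑ t : Δ.Tri, if e ⊆ t.1 then x t else 0 := by
      rw [Finset.mul_sum]
      refine Finset.sum_congr rfl fun t _ => ?_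
      by_cases h : e ⊆ t.1 <;> simp [h]
    rw [h, hx e he, mul_zero]

/-- The underlying point set `|Δ|` of a triangular configuration. -/
def space (Δ : TriangularConfiguration d) : Set (Pt d) :=
  ⋃ s ∈ Δ.faces, convexHull ℝ (s : Set (Pt d))

/-- A cell of `Δ` is a connected component of `ℝ^d \ |Δ|`. -/
def IsCell (Δ : TriangularConfiguration d) (X : Set (Pt d)) : Prop :=
  ∃ x ∈ Δ.spaceᶜ, X = connectedComponentIn Δ.spaceᶜ x

/-- The set of cells of `Δ`. -/
def cells (Δ : TriangularConfiguration d) : Set (Set (Pt d)) := {X | Δ.IsCell X}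

/-- The number of cells of `Δ`. -/
def numCells (Δ : TriangularConfiguration d) : ℕ := Δ.cells.ncard

/-- A triangle `t` is incident with a cell `X` if `t ⊆ cl(X)`. -/
def IncidentCell (Δ : TriangularConfiguration d) (t : Finset (Pt d)) (X : Set (Pt d)) : Prop :=
  Δ.IsCell X ∧ convexHull ℝ (t : Set (Pt d)) ⊆ closure X

/-- A strong boundary: a triangular configuration with at least two cells, every
proper subconfiguration of which has fewer cells. -/
def IsStrongBoundary (C : TriangularConfiguration d) : Prop :=
  2 ≤ C.numCells ∧
    ∀ C' : TriangularConfiguration d, C'.faces ⊂ C.faces → C'.numCells < C.numCells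

/-- A strong boundary of `Δ`: a strong boundary that is a subconfiguration of `Δ`. -/
def IsStrongBoundaryOf (Δ C : TriangularConfiguration d) : Prop :=
  C.IsStrongBoundary ∧ C.faces ⊆ Δ.faces

/-- The inner cell `int C` of a strong boundary `C` (the union of its bounded cells;
for a strong boundary there is exactly one). -/
def intCell (C : TriangularConfiguration d) : Set (Pt d) :=
  ⋃₀ {X | C.IsCell X ∧ Bornology.IsBounded X}

/-- The outer cell `ext C` of a strong boundary `C` (the union of its unbounded cells;
for a strong boundary there is exactly one). -/
def extCell (C : TriangularConfiguration d) : Set (Pt d) :=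
  ⋃₀ {X | C.IsCell X ∧ ¬Bornology.IsBounded X}

/-- An elementary strong boundary of `Δ`. -/
def IsElementary (Δ C : TriangularConfiguration d) : Prop :=
  IsStrongBoundaryOf Δ C ∧
    ∀ C' : TriangularConfiguration d, IsStrongBoundaryOf Δ C' →
      ¬((C.intCell ∩ C'.intCell).Nonempty ∧ (C.intCell ∩ C'.extCell).Nonempty)

/-- `Δ` is connected if every two triangles of `Δ` belong to a common strong
boundary of `Δ`. -/
def Connected (Δ : TriangularConfiguration d) : Prop :=
  ∀ t₁ ∈ Δ.triangles, ∀ t₂ ∈ Δ.triangles,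
    ∃ C : TriangularConfiguration d, IsStrongBoundaryOf Δ C ∧ t₁ ∈ C.faces ∧ t₂ ∈ C.faces

/-- The characteristic vector in `GF(2)^{T(Δ)}` of a subconfiguration `C` of `Δ`. -/
def chi (Δ C : TriangularConfiguration d) : Δ.Tri → ZMod 2 :=
  fun t => if t.1 ∈ C.faces then 1 else 0

/-- The set of characteristic vectors of elementary strong boundaries of `Δ`. -/
def esbVectors (Δ : TriangularConfiguration d) : Set (Δ.Tri → ZMod 2) :=
  {x | ∃ C : TriangularConfiguration d, IsElementary Δ C ∧ x = Δ.chi C}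

/-- The configuration `Δ` with the (2-dimensional) triangle face `t` removed,
keeping all other faces of `Δ`. -/
def eraseTriangle (Δ : TriangularConfiguration d) (t : Finset (Pt d))
    (ht : t ∈ Δ.triangles) : TriangularConfiguration d where
  faces := Δ.faces.erase t
  not_empty_mem h := Δ.not_empty_mem (Finset.mem_of_mem_erase h)
  indep s hs := Δ.indep s (Finset.mem_of_mem_erase hs)
  down_closed := by
    intro s hs u hu hune
    have hsf : s ∈ Δ.faces := Finset.mem_of_mem_erase hs
    refine Finset.mem_erase.2 ⟨?_, Δ.down_closed s hsf u hu hune⟩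
    rintro rfl
    have htc : u.card = 3 := (Finset.mem_filter.1 ht).2
    have hsc : s.card ≤ 3 := Δ.card_le s hsf
    have : u = s := Finset.eq_of_subset_of_card_le hu (by omega)
    exact (Finset.mem_erase.1 hs).1 this.symm
  inter_subset_convexHull s hs u hu :=
    Δ.inter_subset_convexHull s (Finset.mem_of_mem_erase hs) u (Finset.mem_of_mem_erase hu)
  card_le s hs := Δ.card_le s (Finset.mem_of_mem_erase hs)

/-- The subconfiguration `K(E)` of `Δ` generated by a set `E` of triangles of `Δ`:
the triangles of `E` together with all their faces. -/
def generatedBy (Δ : TriangularConfiguration d) (E : Finset (Finset (Pt d))) :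
    TriangularConfiguration d where
  faces := Δ.faces.filter fun s => ∃ u ∈ E, s ⊆ u
  not_empty_mem h := Δ.not_empty_mem (Finset.mem_filter.1 h).1
  indep s hs := Δ.indep s (Finset.mem_filter.1 hs).1
  down_closed := by
    intro s hs u hu hune
    have h := Finset.mem_filter.1 hs
    obtain ⟨w, hw, hsw⟩ := h.2
    exact Finset.mem_filter.2 ⟨Δ.down_closed s h.1 u hu hune, w, hw, hu.trans hsw⟩
  inter_subset_convexHull s hs u hu :=
    Δ.inter_subset_convexHull s (Finset.mem_filter.1 hs).1 u (Finset.mem_filter.1 hu).1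
  card_le s hs := Δ.card_le s (Finset.mem_filter.1 hs).1

end TriangularConfiguration

/-- A binary linear code (given as a subspace of `GF(2)^ι`) has a 2-basis if it has a
basis in which every coordinate is non-zero in at most two basis vectors. -/
def HasTwoBasis {ι : Type*} (C : Submodule (ZMod 2) (ι → ZMod 2)) : Prop :=
  ∃ B : Finset (ι → ZMod 2),
    LinearIndependent (ZMod 2) (fun b : {x // x ∈ B} => (b : ι → ZMod 2)) ∧
    Submodule.span (ZMod 2) (B : Set (ι → ZMod 2)) = C ∧
    ∀ i : ι, (B.filter fun b => b i ≠ 0).card ≤ 2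

/-- A binary linear code `C ⊆ GF(2)^n` has a geometric representation embeddable into
`ℝ^d` if there is a triangular configuration `Δ` embedded in `ℝ^d` such that
`C = ker Δ / S` for some set `S` of triangles of `Δ` (the coordinates outside `S`
being enumerated by an injection `g`) and `dim C = dim ker Δ`. -/
def HasGeomRep (d n : ℕ) (C : Submodule (ZMod 2) (Fin n → ZMod 2)) : Prop :=
  ∃ (Δ : TriangularConfiguration d) (g : Fin n → Δ.Tri),
    Function.Injective g ∧
    C = Δ.cycleSpace.map (LinearMap.funLeft (ZMod 2) (ZMod 2) g) ∧
    Module.finrank (ZMod 2) C = Module.finrank (ZMod 2) Δ.cycleSpace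

/-- The cut space of a finite graph (possibly with loops and parallel edges) whose `n`
edges are given by their endpoints `ends : Fin n → Sym2 V`: the span of the incidence
vectors `χ(E(v))`, where `χ(E(v)) i = 1` iff edge `i` is a non-loop edge incident with `v`. -/
def cutSpace {V : Type} [Fintype V] {n : ℕ} (ends : Fin n → Sym2 V) :
    Submodule (ZMod 2) (Fin n → ZMod 2) :=
  Submodule.span (ZMod 2)
    {x | ∃ v : V, x = fun i => if v ∈ ends i ∧ ¬(ends i).IsDiag then (1 : ZMod 2) else 0}

/-!
Let `n` be a unit vector transversal to `t`. Near a point `q` of the open triangle, `|Δ|` is just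
the plane of `t`, so a small ball around `q` minus that plane consists of two convex half-balls,
one on each side. Lifting a segment of the open triangle slightly along `n` keeps it off `|Δ|`;
hence all half-balls on the `n` side lie in a single cell `X₊`, and all those on the `-n` side in
a single cell `X₋`. A cell incident with `t` meets a half-ball at the centroid, so it is `X₊` or
`X₋`. Finally `X₊ ≠ X₋`: since `Δ` is connected, `t` lies in a strong boundary `C` of `Δ`. If the
two sides of `t` lay in one cell of `C`, deleting `t` from `C` would only glue the open triangle
onto that cell, so the number of cells would not drop, contradicting the minimality of `C`.
-/

open Set Metric Filter Topology

section ConnectedComponents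

variable {X : Type*} [TopologicalSpace X]

theorem connectedComponentIn_eq_of_isOpen_diff {U V : Set X} (hVU : V ⊆ U) (hV : IsOpen V)
    (hUV : IsOpen (U \ V)) {x : X} (hx : x ∈ V) :
    connectedComponentIn U x = connectedComponentIn V x := by
  refine subset_antisymm ?_ (connectedComponentIn_mono x hVU)
  have hxU : x ∈ connectedComponentIn U x := mem_connectedComponentIn (hVU hx)
  have hcover : connectedComponentIn U x ⊆ V ∪ U \ V := fun y hy =>
    (em (y ∈ V)).imp id fun hyV => ⟨connectedComponentIn_subset U x hy, hyV⟩
  exact isPreconnected_connectedComponentIn.subset_connectedComponentIn hxU <|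
    isPreconnected_connectedComponentIn.subset_left_of_subset_union hV hUV
      disjoint_sdiff_right hcover ⟨x, hxU, hx⟩

variable [LocallyConnectedSpace X]

theorem IsOpen.diff_connectedComponentIn {U : Set X} (hU : IsOpen U) (x : X) :
    IsOpen (U \ connectedComponentIn U x) := by
  refine isOpen_iff_forall_mem_open.2 fun y ⟨hyU, hyx⟩ => ⟨connectedComponentIn U y,
    fun z hz => ⟨connectedComponentIn_subset U y hz, fun hzx => hyx ?_⟩,
    hU.connectedComponentIn, mem_connectedComponentIn hyU⟩
  rw [connectedComponentIn_eq hzx, ← connectedComponentIn_eq hz]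
  exact mem_connectedComponentIn hyU

section Gluing

variable {U R : Set X} {x₀ : X}

theorem connectedComponentIn_union_eq_of_mem (hU : IsOpen U) (hRU : Disjoint R U)
    (hR : R ⊆ closure (connectedComponentIn U x₀))
    (hS : IsOpen (connectedComponentIn U x₀ ∪ R)) {x : X}
    (hx : x ∈ connectedComponentIn U x₀ ∪ R) :
    connectedComponentIn (U ∪ R) x = connectedComponentIn U x₀ ∪ R := by
  have hdiff : (U ∪ R) \ (connectedComponentIn U x₀ ∪ R) = U \ connectedComponentIn U x₀ := by
    ext y
    have := hRU.notMem_of_mem_right (a := y)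
    grind
  have hSconn : IsPreconnected (connectedComponentIn U x₀ ∪ R) :=
    isPreconnected_connectedComponentIn.subset_closure subset_union_left
      (union_subset subset_closure hR)
  rw [connectedComponentIn_eq_of_isOpen_diff
      (union_subset_union_left R (connectedComponentIn_subset U x₀)) hS
      (hdiff ▸ hU.diff_connectedComponentIn x₀) hx,
    hSconn.connectedComponentIn hx]

theorem connectedComponentIn_union_eq_of_notMem (hU : IsOpen U) (hRU : Disjoint R U)
    (hS : IsOpen (connectedComponentIn U x₀ ∪ R)) {x : X} (hxU : x ∈ U)
    (hx : x ∉ connectedComponentIn U x₀) :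
    connectedComponentIn (U ∪ R) x = connectedComponentIn U x := by
  have hdiff : (U ∪ R) \ (U \ connectedComponentIn U x₀) = connectedComponentIn U x₀ ∪ R := by
    ext y
    have := hRU.notMem_of_mem_right (a := y)
    have : y ∈ connectedComponentIn U x₀ → y ∈ U := fun h => connectedComponentIn_subset U x₀ h
    grind
  rw [connectedComponentIn_eq_of_isOpen_diff (sdiff_subset.trans subset_union_left)
      (hU.diff_connectedComponentIn x₀) (hdiff ▸ hS) ⟨hxU, hx⟩,
    connectedComponentIn_eq_of_isOpen_diff sdiff_subset (hU.diff_connectedComponentIn x₀)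
      (by rw [sdiff_sdiff_cancel_left (connectedComponentIn_subset U x₀)]
          exact hU.connectedComponentIn) ⟨hxU, hx⟩]

theorem connectedComponentIn_union_eq_ite (hU : IsOpen U) (hRU : Disjoint R U)
    (hR : R ⊆ closure (connectedComponentIn U x₀))
    (hS : IsOpen (connectedComponentIn U x₀ ∪ R)) {x : X} (hxU : x ∈ U) :
    connectedComponentIn (U ∪ R) x =
      if connectedComponentIn U x = connectedComponentIn U x₀ then connectedComponentIn U x₀ ∪ R
      else connectedComponentIn U x := by
  by_cases hx : x ∈ connectedComponentIn U x₀
  · rw [← connectedComponentIn_eq hx, if_pos rfl,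
      connectedComponentIn_union_eq_of_mem hU hRU hR hS (Or.inl hx)]
  · have hne : connectedComponentIn U x ≠ connectedComponentIn U x₀ :=
      fun h => hx (h ▸ mem_connectedComponentIn hxU)
    rw [if_neg hne, connectedComponentIn_union_eq_of_notMem hU hRU hS hxU hx]

theorem ncard_components_union_eq (hU : IsOpen U) (hRU : Disjoint R U) (hR : R.Nonempty)
    (hx₀ : x₀ ∈ U) (hR_cl : R ⊆ closure (connectedComponentIn U x₀))
    (hS : IsOpen (connectedComponentIn U x₀ ∪ R)) :
    {Z | ∃ x ∈ U ∪ R, Z = connectedComponentIn (U ∪ R) x}.ncard =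
      {Z | ∃ x ∈ U, Z = connectedComponentIn U x}.ncard := by
  set X₀ := connectedComponentIn U x₀
  let glue : Set X → Set X := fun Z => if Z = X₀ then X₀ ∪ R else Z
  have himage : {Z | ∃ x ∈ U ∪ R, Z = connectedComponentIn (U ∪ R) x} =
      glue '' {Z | ∃ x ∈ U, Z = connectedComponentIn U x} := by
    ext Z
    constructor
    · rintro ⟨x, hx | hx, rfl⟩
      · exact ⟨_, ⟨x, hx, rfl⟩, (connectedComponentIn_union_eq_ite hU hRU hR_cl hS hx).symm⟩
      · refine ⟨X₀, ⟨x₀, hx₀, rfl⟩, ?_⟩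
        rw [connectedComponentIn_union_eq_of_mem hU hRU hR_cl hS (Or.inr hx)]
        exact if_pos rfl
    · rintro ⟨_, ⟨x, hxU, rfl⟩, rfl⟩
      exact ⟨x, Or.inl hxU, (connectedComponentIn_union_eq_ite hU hRU hR_cl hS hxU).symm⟩
  rw [himage]
  refine InjOn.ncard_image ?_
  have hX₀R_ne : ∀ x ∈ U, X₀ ∪ R ≠ connectedComponentIn U x := fun x _ h => by
    obtain ⟨r, hr⟩ := hR
    exact hRU.notMem_of_mem_left hr (connectedComponentIn_subset U x (h ▸ Or.inr hr))
  rintro _ ⟨x, hxU, rfl⟩ _ ⟨y, hyU, rfl⟩ hxy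
  simp only [glue] at hxy
  split_ifs at hxy with hx hy hy
  · rw [hx, hy]
  · exact absurd hxy (hX₀R_ne y hyU)
  · exact absurd hxy.symm (hX₀R_ne x hxU)
  · exact hxy

end Gluing

end ConnectedComponents

namespace TriangularConfiguration

variable {d : ℕ} {Δ C : TriangularConfiguration d} {t : Finset (Pt d)}

theorem isClosed_space (Δ : TriangularConfiguration d) : IsClosed Δ.space :=
  Δ.faces.finite_toSet.isClosed_biUnion fun s _ =>
    (s.finite_toSet.isCompact_convexHull ℝ).isClosed

theorem space_mono (h : C.faces ⊆ Δ.faces) : C.space ⊆ Δ.space :=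
  biUnion_subset_biUnion_left fun _ hs => h hs

theorem convexHull_subset_space {s : Finset (Pt d)} (hs : s ∈ Δ.faces) :
    convexHull ℝ (s : Set (Pt d)) ⊆ Δ.space :=
  subset_biUnion_of_mem (u := fun s : Finset (Pt d) => convexHull ℝ (s : Set (Pt d))) hs

theorem mem_triangles : t ∈ Δ.triangles ↔ t ∈ Δ.faces ∧ t.card = 3 :=
  Finset.mem_filter

theorem space_eq_convexHull_union (ht : t ∈ Δ.triangles) :
    Δ.space = convexHull ℝ (t : Set (Pt d)) ∪ (Δ.eraseTriangle t ht).space := by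
  simp only [space, eraseTriangle]
  conv_lhs => rw [← Finset.insert_erase (mem_triangles.1 ht).1]
  rw [Finset.set_biUnion_insert]

theorem eraseTriangle_ssubset (ht : t ∈ Δ.triangles) :
    (Δ.eraseTriangle t ht).faces ⊂ Δ.faces :=
  Finset.erase_ssubset (mem_triangles.1 ht).1

theorem nonempty_eraseTriangle_space (ht : t ∈ Δ.triangles) :
    (Δ.eraseTriangle t ht).space.Nonempty := by
  obtain ⟨htΔ, hcard⟩ := mem_triangles.1 ht
  obtain ⟨v, hv⟩ : t.Nonempty := Finset.card_pos.1 (by omega)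
  have hvt : {v} ≠ t := fun h => by simp [← h] at hcard
  have hface : {v} ∈ (Δ.eraseTriangle t ht).faces :=
    Finset.mem_erase.2 ⟨hvt, Δ.down_closed t htΔ {v} (by simpa using hv) (by simp)⟩
  exact ⟨v, convexHull_subset_space hface (subset_convexHull ℝ _ (by simp))⟩

theorem IsCell.isOpen {X : Set (Pt d)} (hX : Δ.IsCell X) : IsOpen X := by
  obtain ⟨x, -, rfl⟩ := hX
  exact Δ.isClosed_space.isOpen_compl.connectedComponentIn

theorem IsCell.subset_compl {X : Set (Pt d)} (hX : Δ.IsCell X) : X ⊆ Δ.spaceᶜ := by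
  obtain ⟨x, -, rfl⟩ := hX
  exact connectedComponentIn_subset _ _

theorem IsCell.eq_connectedComponentIn {X : Set (Pt d)} (hX : Δ.IsCell X) {x : Pt d}
    (hx : x ∈ X) : X = connectedComponentIn Δ.spaceᶜ x := by
  obtain ⟨y, -, rfl⟩ := hX
  exact connectedComponentIn_eq hx

theorem IsCell.eq_of_mem {X Y : Set (Pt d)} (hX : Δ.IsCell X) (hY : Δ.IsCell Y) {x : Pt d}
    (hxX : x ∈ X) (hxY : x ∈ Y) : X = Y :=
  (hX.eq_connectedComponentIn hxX).trans (hY.eq_connectedComponentIn hxY).symm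

end TriangularConfiguration

theorem exists_eq_triple_linearIndependent {E : Type*} [AddCommGroup E] [Module ℝ E]
    [DecidableEq E] {t : Finset E} (hcard : t.card = 3)
    (hind : AffineIndependent ℝ ((↑) : t → E)) :
    ∃ a b c, t = {a, b, c} ∧ LinearIndependent ℝ ![b - a, c - a] := by
  obtain ⟨a, b, c, hab, hac, hbc, ht⟩ := Finset.card_eq_three.1 hcard
  have hinj : Function.Injective ![a, b, c] := by
    intro i j h
    fin_cases i <;> fin_cases j <;> simp_all
  have hmem : ∀ i, ![a, b, c] i ∈ t := fun i => by fin_cases i <;> simp [ht]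
  have hind₃ : AffineIndependent ℝ ![a, b, c] :=
    hind.comp_embedding ⟨fun i => (⟨![a, b, c] i, hmem i⟩ : t),
      fun i j h => hinj (congrArg Subtype.val h)⟩
  rw [affineIndependent_iff_linearIndependent_vsub ℝ _ (0 : Fin 3),
    ← linearIndependent_equiv (finSuccAboveEquiv (0 : Fin 3))] at hind₃
  refine ⟨a, b, c, ht, ?_⟩
  convert hind₃ using 1
  · funext i
    fin_cases i <;> rfl
  · rfl

theorem exists_norm_eq_one_notMem_span (x y : Pt 3) :
    ∃ n : Pt 3, ‖n‖ = 1 ∧ n ∉ Submodule.span ℝ (range ![x, y]) := by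
  have hspan : Submodule.span ℝ (range ![x, y]) ≠ ⊤ := fun h => by
    have := finrank_range_le_card (R := ℝ) ![x, y]
    rw [Set.finrank, h, finrank_top, finrank_euclideanSpace_fin] at this
    simp at this
  obtain ⟨n, -, hn⟩ := SetLike.exists_of_lt (lt_top_iff_ne_top.2 hspan)
  have hn₀ : n ≠ 0 := fun h => hn (h ▸ Submodule.zero_mem _)
  refine ⟨‖n‖⁻¹ • n, norm_smul_inv_norm hn₀, fun h => hn ?_⟩
  simpa [smul_smul, hn₀] using Submodule.smul_mem _ ‖n‖ h

/-- `(α, β, γ)` is the basis dual to `(b - a, c - a, n)`. The unit vector `n` is transversal to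
the plane of `t` but need not be orthogonal to it. -/
structure TriangleFrame (t : Finset (Pt 3)) where
  a : Pt 3
  b : Pt 3
  c : Pt 3
  n : Pt 3
  α : Pt 3 →ₗ[ℝ] ℝ
  β : Pt 3 →ₗ[ℝ] ℝ
  γ : Pt 3 →ₗ[ℝ] ℝ
  eq_triple : t = {a, b, c}
  norm_n : ‖n‖ = 1
  α_b : α (b - a) = 1
  α_c : α (c - a) = 0
  β_b : β (b - a) = 0
  β_c : β (c - a) = 1
  γ_b : γ (b - a) = 0
  γ_c : γ (c - a) = 0
  γ_n : γ n = 1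
  decomp : ∀ w, α w • (b - a) + β w • (c - a) + γ w • n = w

namespace TriangleFrame

variable {t : Finset (Pt 3)} (f : TriangleFrame t)

def u (x : Pt 3) : ℝ := f.α (x - f.a)

def v (x : Pt 3) : ℝ := f.β (x - f.a)

def height (x : Pt 3) : ℝ := f.γ (x - f.a)

def openTriangle : Set (Pt 3) := {x | 0 < f.u x ∧ 0 < f.v x ∧ f.u x + f.v x < 1 ∧ f.height x = 0}

def prism : Set (Pt 3) := {x | 0 < f.u x ∧ 0 < f.v x ∧ f.u x + f.v x < 1}

def centroid : Pt 3 := f.a + (3⁻¹ : ℝ) • (f.b - f.a) + (3⁻¹ : ℝ) • (f.c - f.a)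

def neg : TriangleFrame t where
  __ := f
  n := -f.n
  γ := -f.γ
  norm_n := by simpa using f.norm_n
  γ_b := by simp [f.γ_b]
  γ_c := by simp [f.γ_c]
  γ_n := by simp [f.γ_n]
  decomp w := by simpa using f.decomp w

@[simp] theorem neg_u : f.neg.u = f.u := rfl
@[simp] theorem neg_v : f.neg.v = f.v := rfl
@[simp] theorem neg_height (x : Pt 3) : f.neg.height x = -f.height x := rfl

@[simp] theorem neg_openTriangle : f.neg.openTriangle = f.openTriangle := by
  ext x
  simp [openTriangle]

theorem eq_coords (x : Pt 3) :
    x = f.a + f.u x • (f.b - f.a) + f.v x • (f.c - f.a) + f.height x • f.n := by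
  have := f.decomp (x - f.a)
  rw [u, v, height, add_assoc, add_assoc, ← add_assoc (_ • _), this]
  abel

section Coordinates

variable (x y : Pt 3) (θ s : ℝ)

theorem u_add_smul_sub : f.u (x + θ • (y - x)) = f.u x + θ * (f.u y - f.u x) := by
  simp only [u, map_add, map_sub, map_smul, smul_eq_mul]; ring
theorem v_add_smul_sub : f.v (x + θ • (y - x)) = f.v x + θ * (f.v y - f.v x) := by
  simp only [v, map_add, map_sub, map_smul, smul_eq_mul]; ring
theorem height_add_smul_sub :
    f.height (x + θ • (y - x)) = f.height x + θ * (f.height y - f.height x) := by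
  simp only [height, map_add, map_sub, map_smul, smul_eq_mul]; ring

theorem height_add_smul_n : f.height (x + s • f.n) = f.height x + s := by
  simp [height, add_sub_right_comm, f.γ_n]

@[simp] theorem u_a : f.u f.a = 0 := by simp [u]
@[simp] theorem u_b : f.u f.b = 1 := f.α_b
@[simp] theorem u_c : f.u f.c = 0 := f.α_c
@[simp] theorem v_a : f.v f.a = 0 := by simp [v]
@[simp] theorem v_b : f.v f.b = 0 := f.β_b
@[simp] theorem v_c : f.v f.c = 1 := f.β_c
@[simp] theorem height_a : f.height f.a = 0 := by simp [height]
@[simp] theorem height_b : f.height f.b = 0 := f.γ_b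
@[simp] theorem height_c : f.height f.c = 0 := f.γ_c

end Coordinates

theorem isOpen_prism : IsOpen f.prism := by
  have hu : Continuous f.u := f.α.continuous_of_finiteDimensional.comp (continuous_sub_right _)
  have hv : Continuous f.v := f.β.continuous_of_finiteDimensional.comp (continuous_sub_right _)
  exact (isOpen_lt continuous_const hu).inter
    ((isOpen_lt continuous_const hv).inter (isOpen_lt (hu.add hv) continuous_const))

theorem convex_setOf_height_pos : Convex ℝ {x | 0 < f.height x} := by
  simpa [height, sub_pos] using convex_halfSpace_gt f.γ.isLinear (f.γ f.a)

theorem coe_eq_triple : (t : Set (Pt 3)) = {f.a, f.b, f.c} := by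
  simp [f.eq_triple]

theorem a_ne_b : f.a ≠ f.b := fun h => by simpa [h] using f.α_b
theorem a_ne_c : f.a ≠ f.c := fun h => by simpa [h] using f.β_c
theorem b_ne_c : f.b ≠ f.c := fun h => by simpa [h, f.α_c] using f.α_b

theorem mem_convexHull_iff {x : Pt 3} :
    x ∈ convexHull ℝ (t : Set (Pt 3)) ↔
      0 ≤ f.u x ∧ 0 ≤ f.v x ∧ f.u x + f.v x ≤ 1 ∧ f.height x = 0 := by
  constructor
  · refine fun hx => (convexHull_min ?_ ?_ : _ ⊆ {x : Pt 3 | 0 ≤ f.u x ∧ 0 ≤ f.v x ∧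
      f.u x + f.v x ≤ 1 ∧ f.height x = 0}) hx
    · rw [f.coe_eq_triple]
      rintro _ (rfl | rfl | rfl) <;> simp
    · refine convex_iff_segment_subset.2 fun x ⟨hx₁, hx₂, hx₃, hx₄⟩ y ⟨hy₁, hy₂, hy₃, hy₄⟩ => ?_
      rw [segment_eq_image']
      rintro _ ⟨θ, ⟨h₀, h₁⟩, rfl⟩
      simp only [mem_ofPred_eq, u_add_smul_sub, v_add_smul_sub, height_add_smul_sub, hx₄, hy₄]
      refine ⟨by nlinarith, by nlinarith, by nlinarith, by ring⟩
  · rintro ⟨hu, hv, huv, hh⟩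
    have hmem := (convex_convexHull ℝ (t : Set (Pt 3))).sum_mem (t := Finset.univ)
      (w := ![1 - f.u x - f.v x, f.u x, f.v x]) (z := ![f.a, f.b, f.c])
      (fun i _ => by fin_cases i <;> simp <;> linarith) (by simp [Fin.sum_univ_three]; ring)
      (fun i _ => subset_convexHull ℝ _ (by fin_cases i <;> simp [f.eq_triple]))
    convert hmem using 1
    conv_lhs => rw [f.eq_coords x, hh]
    simp [Fin.sum_univ_three]
    module

theorem openTriangle_subset_convexHull : f.openTriangle ⊆ convexHull ℝ (t : Set (Pt 3)) :=
  fun _ ⟨h₁, h₂, h₃, h₄⟩ => f.mem_convexHull_iff.2 ⟨h₁.le, h₂.le, h₃.le, h₄⟩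

theorem openTriangle_subset_prism : f.openTriangle ⊆ f.prism :=
  fun _ h => ⟨h.1, h.2.1, h.2.2.1⟩

theorem centroid_mem_openTriangle : f.centroid ∈ f.openTriangle := by
  have hsub : f.centroid - f.a = (3⁻¹ : ℝ) • (f.b - f.a) + (3⁻¹ : ℝ) • (f.c - f.a) := by
    rw [centroid, add_assoc, add_sub_cancel_left]
  simp only [openTriangle, u, v, height, mem_ofPred_eq, hsub, map_add, map_smul,
    f.α_b, f.α_c, f.β_b, f.β_c, f.γ_b, f.γ_c, smul_eq_mul]
  norm_num

theorem add_smul_sub_mem_openTriangle {x y : Pt 3} (hx : x ∈ convexHull ℝ (t : Set (Pt 3)))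
    (hy : y ∈ f.openTriangle) {θ : ℝ} (hθ₀ : 0 < θ) (hθ₁ : θ ≤ 1) :
    x + θ • (y - x) ∈ f.openTriangle := by
  obtain ⟨hx₁, hx₂, hx₃, hx₄⟩ := f.mem_convexHull_iff.1 hx
  obtain ⟨hy₁, hy₂, hy₃, hy₄⟩ := hy
  simp only [openTriangle, mem_ofPred_eq, u_add_smul_sub, v_add_smul_sub, height_add_smul_sub,
    hx₄, hy₄]
  refine ⟨by nlinarith, by nlinarith, by nlinarith, by ring⟩

theorem segment_subset_openTriangle {x y : Pt 3} (hx : x ∈ f.openTriangle)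
    (hy : y ∈ f.openTriangle) : segment ℝ x y ⊆ f.openTriangle := by
  rw [segment_eq_image']
  rintro _ ⟨θ, ⟨h₀, h₁⟩, rfl⟩
  rcases h₀.eq_or_lt with rfl | h₀
  · simpa using hx
  · exact f.add_smul_sub_mem_openTriangle (f.openTriangle_subset_convexHull hx) hy h₀ h₁

theorem convexHull_subset_closure_openTriangle :
    convexHull ℝ (t : Set (Pt 3)) ⊆ closure f.openTriangle := by
  intro x hx
  have hcont : Continuous fun θ : ℝ => x + θ • (f.centroid - x) := by fun_prop
  have hlim := (hcont.tendsto' 0 x (by simp)).mono_left (nhdsWithin_le_nhds (s := Ioi 0))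
  refine mem_closure_of_tendsto hlim ?_
  filter_upwards [Ioc_mem_nhdsGT one_pos] with θ hθ
  exact f.add_smul_sub_mem_openTriangle hx f.centroid_mem_openTriangle hθ.1 hθ.2

theorem exists_ssubset_mem_convexHull_of_notMem_openTriangle {x : Pt 3}
    (hx : x ∈ convexHull ℝ (t : Set (Pt 3))) (hxT : x ∉ f.openTriangle) :
    ∃ e ⊂ t, e.Nonempty ∧ x ∈ convexHull ℝ (e : Set (Pt 3)) := by
  obtain ⟨hu, hv, huv, hh⟩ := f.mem_convexHull_iff.1 hx
  have hx' := f.eq_coords x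
  rw [hh, zero_smul, add_zero] at hx'
  have hedge : ∀ {p q r : Pt 3}, t = {p, q, r} → r ≠ p → r ≠ q → ∀ θ ∈ Icc (0 : ℝ) 1,
      x = p + θ • (q - p) → ∃ e ⊂ t, e.Nonempty ∧ x ∈ convexHull ℝ (e : Set (Pt 3)) := by
    rintro p q r rfl hrp hrq θ hθ rfl
    refine ⟨{p, q}, ?_, Finset.insert_nonempty _ _, ?_⟩
    · rw [Finset.ssubset_iff_of_subset (Finset.insert_subset_insert _ (by simp))]
      exact ⟨r, by simp, by simp [hrp, hrq]⟩
    · rw [Finset.coe_pair, convexHull_pair, segment_eq_image']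
      exact ⟨θ, hθ, rfl⟩
  have hedge_cases : f.u x = 0 ∨ f.v x = 0 ∨ f.u x + f.v x = 1 := by
    by_contra! h
    exact hxT ⟨hu.lt_of_ne' h.1, hv.lt_of_ne' h.2.1, huv.lt_of_ne h.2.2, hh⟩
  rcases hedge_cases with h | h | h
  · refine hedge (r := f.b) (f.eq_triple.trans (by ext; simp; tauto)) f.a_ne_b.symm f.b_ne_c
      (f.v x) ⟨hv, by linarith⟩ ?_
    conv_lhs => rw [hx', h, zero_smul, add_zero]
  · refine hedge (r := f.c) f.eq_triple f.a_ne_c.symm f.b_ne_c.symm (f.u x) ⟨hu, by linarith⟩ ?_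
    conv_lhs => rw [hx', h, zero_smul, add_zero]
  · refine hedge (r := f.a) (f.eq_triple.trans (by ext; simp; tauto)) f.a_ne_b f.a_ne_c
      (f.v x) ⟨hv, by linarith⟩ ?_
    conv_lhs => rw [hx', show f.u x = 1 - f.v x by linarith]
    module

theorem disjoint_openTriangle_convexHull {e : Finset (Pt 3)} (he : e ⊂ t) :
    Disjoint f.openTriangle (convexHull ℝ (e : Set (Pt 3))) := by
  have hedge : ∀ {p q : Pt 3}, (e : Set (Pt 3)) ⊆ {p, q} →
      (∀ θ : ℝ, p + θ • (q - p) ∉ f.openTriangle) →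
      Disjoint f.openTriangle (convexHull ℝ (e : Set (Pt 3))) := by
    intro p q hepq hpq
    refine disjoint_left.2 fun y hy hye => ?_
    have hy' := convexHull_mono hepq hye
    rw [convexHull_pair, segment_eq_image'] at hy'
    obtain ⟨θ, -, rfl⟩ := hy'
    exact hpq θ hy
  obtain ⟨w, hwt, hwe⟩ := Finset.exists_of_ssubset he
  have hsub : ∀ p ∈ e, p = f.a ∨ p = f.b ∨ p = f.c := fun p hp => by
    simpa [f.eq_triple] using he.1 hp
  simp only [f.eq_triple, Finset.mem_insert, Finset.mem_singleton] at hwt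
  rcases hwt with rfl | rfl | rfl
  · refine hedge (p := f.b) (q := f.c) (fun p hp => ?_) fun θ h => ?_
    · rcases hsub p hp with rfl | rfl | rfl <;> simp_all
    · have := h.2.2.1
      simp only [u_add_smul_sub, v_add_smul_sub, u_b, u_c, v_b, v_c] at this
      linarith
  · refine hedge (p := f.a) (q := f.c) (fun p hp => ?_) fun θ h => ?_
    · rcases hsub p hp with rfl | rfl | rfl <;> simp_all
    · have := h.1
      simp only [u_add_smul_sub, u_a, u_c] at this
      linarith
  · refine hedge (p := f.a) (q := f.b) (fun p hp => ?_) fun θ h => ?_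
    · rcases hsub p hp with rfl | rfl | rfl <;> simp_all
    · have := h.2.1
      simp only [v_add_smul_sub, v_a, v_b] at this
      linarith

theorem nonempty_of_affineIndependent (hcard : t.card = 3)
    (hind : AffineIndependent ℝ ((↑) : t → Pt 3)) : Nonempty (TriangleFrame t) := by
  obtain ⟨a, b, c, ht, hli⟩ := exists_eq_triple_linearIndependent hcard hind
  obtain ⟨n, hn₁, hn⟩ := exists_norm_eq_one_notMem_span (b - a) (c - a)
  let Bs := basisOfLinearIndependentOfCardEqFinrank (hli.finCons hn) (by simp)
  have hBs : ⇑Bs = ![n, b - a, c - a] := coe_basisOfLinearIndependentOfCardEqFinrank _ _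
  have key : ∀ i j : Fin 3, Bs.coord i (![n, b - a, c - a] j) = if j = i then 1 else 0 := by
    intro i j
    rw [← hBs, Module.Basis.coord_apply, Module.Basis.repr_self, Finsupp.single_apply]
  refine ⟨{
    a := a
    b := b
    c := c
    n := n
    α := Bs.coord 1
    β := Bs.coord 2
    γ := Bs.coord 0
    eq_triple := ht
    norm_n := hn₁
    α_b := by simpa using key 1 1
    α_c := by simpa using key 1 2
    β_b := by simpa using key 2 1
    β_c := by simpa using key 2 2
    γ_b := by simpa using key 0 1
    γ_c := by simpa using key 0 2
    γ_n := by simpa using key 0 0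
    decomp := fun w => ?_ }⟩
  conv_rhs => rw [← Bs.sum_repr w]
  simp [Fin.sum_univ_three, hBs, Module.Basis.coord_apply]
  abel

end TriangleFrame

open TriangularConfiguration

namespace TriangleFrame

variable {Δ C : TriangularConfiguration 3} {t : Finset (Pt 3)} (f : TriangleFrame t)

theorem disjoint_openTriangle_eraseTriangle_space (ht : t ∈ Δ.triangles) :
    Disjoint f.openTriangle (Δ.eraseTriangle t ht).space := by
  refine disjoint_left.2 fun x hx hxs => ?_
  simp only [space, mem_iUnion] at hxs
  obtain ⟨s, hs, hxs⟩ := hxs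
  obtain ⟨hst, hsΔ⟩ := Finset.mem_erase.1 hs
  obtain ⟨htΔ, hcard⟩ := mem_triangles.1 ht
  have hinter : s ∩ t ⊂ t := by
    refine Finset.ssubset_iff_subset_ne.2 ⟨Finset.inter_subset_right, fun h => hst ?_⟩
    exact (Finset.eq_of_subset_of_card_le (Finset.inter_eq_right.1 h)
      (by rw [hcard]; exact Δ.card_le s hsΔ)).symm
  exact disjoint_left.1 (f.disjoint_openTriangle_convexHull hinter) hx
    (Δ.inter_subset_convexHull s hsΔ t htΔ ⟨hxs, f.openTriangle_subset_convexHull hx⟩)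

theorem convexHull_diff_eraseTriangle_space (ht : t ∈ Δ.triangles) :
    convexHull ℝ (t : Set (Pt 3)) \ (Δ.eraseTriangle t ht).space = f.openTriangle := by
  refine subset_antisymm (fun x ⟨hx, hxs⟩ => ?_) fun x hx => ⟨f.openTriangle_subset_convexHull hx,
    disjoint_left.1 (f.disjoint_openTriangle_eraseTriangle_space ht) hx⟩
  by_contra hxT
  obtain ⟨e, het, hne, hxe⟩ := f.exists_ssubset_mem_convexHull_of_notMem_openTriangle hx hxT
  have he : e ∈ (Δ.eraseTriangle t ht).faces := Finset.mem_erase.2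
    ⟨het.ne, Δ.down_closed t (mem_triangles.1 ht).1 e het.subset hne.ne_empty⟩
  exact hxs (convexHull_subset_space he hxe)

theorem compl_eraseTriangle_space (ht : t ∈ Δ.triangles) :
    (Δ.eraseTriangle t ht).spaceᶜ = Δ.spaceᶜ ∪ f.openTriangle := by
  rw [Δ.space_eq_convexHull_union ht, ← f.convexHull_diff_eraseTriangle_space ht]
  ext x
  simp only [mem_compl_iff, mem_union, Set.mem_sdiff]
  tauto

theorem infDist_eraseTriangle_space_pos (ht : t ∈ Δ.triangles) {q : Pt 3}
    (hq : q ∈ f.openTriangle) : 0 < infDist q (Δ.eraseTriangle t ht).space :=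
  ((isClosed_space _).notMem_iff_infDist_pos (nonempty_eraseTriangle_space ht)).1
    (disjoint_left.1 (f.disjoint_openTriangle_eraseTriangle_space ht) hq)

def sideBall (ht : t ∈ Δ.triangles) (q : Pt 3) : Set (Pt 3) :=
  ball q (infDist q (Δ.eraseTriangle t ht).space) ∩ {x | 0 < f.height x}

def sidePoint (ht : t ∈ Δ.triangles) : Pt 3 :=
  f.centroid + (infDist f.centroid (Δ.eraseTriangle t ht).space / 2) • f.n

def sideCell (ht : t ∈ Δ.triangles) : Set (Pt 3) :=
  connectedComponentIn Δ.spaceᶜ (f.sidePoint ht)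

section Sides

variable (ht : t ∈ Δ.triangles)

theorem sideBall_subset_compl (q : Pt 3) : f.sideBall ht q ⊆ Δ.spaceᶜ := by
  rintro x ⟨hxq, hh⟩ hx
  rw [Δ.space_eq_convexHull_union ht] at hx
  rcases hx with hx | hx
  · exact hh.ne' (f.mem_convexHull_iff.1 hx).2.2.2
  · exact (infDist_le_dist_of_mem hx).not_gt (mem_ball'.1 hxq)

theorem isPreconnected_sideBall (q : Pt 3) : IsPreconnected (f.sideBall ht q) :=
  ((convex_ball _ _).inter f.convex_setOf_height_pos).isPreconnected

theorem add_smul_n_mem_sideBall {q : Pt 3} (hq : f.height q = 0) {s : ℝ} (hs₀ : 0 < s)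
    (hs : s < infDist q (Δ.eraseTriangle t ht).space) : q + s • f.n ∈ f.sideBall ht q := by
  refine ⟨?_, ?_⟩
  · rwa [mem_ball, dist_self_add_left, norm_smul, f.norm_n, mul_one, Real.norm_of_nonneg hs₀.le]
  · rwa [mem_ofPred_eq, f.height_add_smul_n, hq, zero_add]

theorem sidePoint_mem_sideBall : f.sidePoint ht ∈ f.sideBall ht f.centroid := by
  have hpos := f.infDist_eraseTriangle_space_pos ht f.centroid_mem_openTriangle
  exact f.add_smul_n_mem_sideBall ht f.centroid_mem_openTriangle.2.2.2 (half_pos hpos)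
    (half_lt_self hpos)

theorem sidePoint_mem_compl : f.sidePoint ht ∈ Δ.spaceᶜ :=
  f.sideBall_subset_compl ht _ (f.sidePoint_mem_sideBall ht)

theorem sidePoint_mem_sideCell : f.sidePoint ht ∈ f.sideCell ht :=
  mem_connectedComponentIn (f.sidePoint_mem_compl ht)

theorem isCell_sideCell : Δ.IsCell (f.sideCell ht) :=
  ⟨_, f.sidePoint_mem_compl ht, rfl⟩

theorem sideBall_subset_sideCell {q : Pt 3} (hq : q ∈ f.openTriangle) :
    f.sideBall ht q ⊆ f.sideCell ht := by
  set S := (Δ.eraseTriangle t ht).space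
  set p := f.centroid
  have hseg : segment ℝ q p ⊆ f.openTriangle :=
    f.segment_subset_openTriangle hq f.centroid_mem_openTriangle
  have hK : IsCompact (segment ℝ q p) := by
    rw [← convexHull_pair]
    exact (toFinite _).isCompact_convexHull ℝ
  obtain ⟨z, hz, hmin⟩ := hK.exists_isMinOn ⟨q, left_mem_segment ℝ q p⟩
    (continuous_infDist_pt S).continuousOn
  have hm := f.infDist_eraseTriangle_space_pos ht (hseg hz)
  -- lifting `[q, p]` by half the minimal distance to the rest of `Δ` keeps it off `|Δ|`
  have hlift : ∀ y ∈ segment ℝ q p, y + (infDist z S / 2) • f.n ∈ f.sideBall ht y :=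
    fun y hy => f.add_smul_n_mem_sideBall ht (hseg hy).2.2.2 (half_pos hm)
      ((half_lt_self hm).trans_le (hmin hy))
  set L := (· + (infDist z S / 2) • f.n) '' segment ℝ q p
  have hL : IsPreconnected L :=
    (convex_segment q p).isPreconnected.image _ (continuous_add_const _).continuousOn
  have hLc : L ⊆ Δ.spaceᶜ := by
    rintro _ ⟨y, hy, rfl⟩
    exact f.sideBall_subset_compl ht y (hlift y hy)
  have hp : f.sideBall ht p ⊆ f.sideCell ht :=
    (f.isPreconnected_sideBall ht p).subset_connectedComponentIn (f.sidePoint_mem_sideBall ht)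
      (f.sideBall_subset_compl ht p)
  have hLcell : L ⊆ f.sideCell ht := by
    rw [sideCell, connectedComponentIn_eq (hp (hlift p (right_mem_segment ℝ q p)))]
    exact hL.subset_connectedComponentIn ⟨p, right_mem_segment ℝ q p, rfl⟩ hLc
  rw [sideCell, connectedComponentIn_eq (hLcell ⟨q, left_mem_segment ℝ q p, rfl⟩)]
  exact (f.isPreconnected_sideBall ht q).subset_connectedComponentIn
    (hlift q (left_mem_segment ℝ q p)) (f.sideBall_subset_compl ht q)

theorem mem_closure_sideBall {q : Pt 3} (hq : q ∈ f.openTriangle) :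
    q ∈ closure (f.sideBall ht q) := by
  have hcont : Continuous fun s : ℝ => q + s • f.n := by fun_prop
  refine mem_closure_of_tendsto
    ((hcont.tendsto' 0 q (by simp)).mono_left (nhdsWithin_le_nhds (s := Ioi 0))) ?_
  filter_upwards [Ioo_mem_nhdsGT (f.infDist_eraseTriangle_space_pos ht hq)] with s hs
  exact f.add_smul_n_mem_sideBall ht hq.2.2.2 hs.1 hs.2

theorem openTriangle_subset_closure_sideCell : f.openTriangle ⊆ closure (f.sideCell ht) :=
  fun _ hq => closure_mono (f.sideBall_subset_sideCell ht hq) (f.mem_closure_sideBall ht hq)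

theorem incidentCell_sideCell : Δ.IncidentCell t (f.sideCell ht) :=
  ⟨f.isCell_sideCell ht, f.convexHull_subset_closure_openTriangle.trans
    (closure_minimal (f.openTriangle_subset_closure_sideCell ht) isClosed_closure)⟩

theorem exists_ball_subset {q : Pt 3} (hq : q ∈ f.openTriangle) :
    ∃ ε > 0, ball q ε ⊆ f.sideBall ht q ∪ f.neg.sideBall ht q ∪ f.openTriangle := by
  obtain ⟨ε, hε, hball⟩ := Metric.isOpen_iff.1 f.isOpen_prism q (f.openTriangle_subset_prism hq)
  refine ⟨min ε _, lt_min hε (f.infDist_eraseTriangle_space_pos ht hq), fun y hy => ?_⟩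
  have hyS := ball_subset_ball (min_le_right _ _) hy
  rcases lt_trichotomy (f.height y) 0 with h | h | h
  · exact Or.inl (Or.inr ⟨hyS, neg_pos.2 h⟩)
  · obtain ⟨h₁, h₂, h₃⟩ := hball (ball_subset_ball (min_le_left _ _) hy)
    exact Or.inr ⟨h₁, h₂, h₃, h⟩
  · exact Or.inl (Or.inl ⟨hyS, h⟩)

theorem incidentCell_eq_or_eq {Z : Set (Pt 3)} (hZ : Δ.IncidentCell t Z) :
    Z = f.sideCell ht ∨ Z = f.neg.sideCell ht := by
  have hp := f.centroid_mem_openTriangle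
  obtain ⟨ε, hε, hball⟩ := f.exists_ball_subset ht hp
  obtain ⟨y, hyZ, hy⟩ := Metric.mem_closure_iff.1
    (hZ.2 (f.openTriangle_subset_convexHull hp)) ε hε
  rcases hball (mem_ball'.2 hy) with (h | h) | h
  · exact Or.inl (hZ.1.eq_of_mem (f.isCell_sideCell ht) hyZ (f.sideBall_subset_sideCell ht hp h))
  · exact Or.inr (hZ.1.eq_of_mem (f.neg.isCell_sideCell ht) hyZ
      (f.neg.sideBall_subset_sideCell ht f.neg.centroid_mem_openTriangle h))
  · exact absurd (convexHull_subset_space (mem_triangles.1 ht).1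
      (f.openTriangle_subset_convexHull h)) (hZ.1.subset_compl hyZ)

end Sides

theorem isOpen_sideCell_union_openTriangle (ht : t ∈ Δ.triangles)
    (h : f.sideCell ht = f.neg.sideCell ht) : IsOpen (f.sideCell ht ∪ f.openTriangle) := by
  refine Metric.isOpen_iff.2 fun x hx => ?_
  rcases hx with hx | hx
  · obtain ⟨ε, hε, hb⟩ := Metric.isOpen_iff.1 (f.isCell_sideCell ht).isOpen x hx
    exact ⟨ε, hε, hb.trans subset_union_left⟩
  · obtain ⟨ε, hε, hb⟩ := f.exists_ball_subset ht hx
    refine ⟨ε, hε, hb.trans (union_subset_union_left _ (union_subset ?_ ?_))⟩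
    · exact f.sideBall_subset_sideCell ht hx
    · rw [h]
      exact f.neg.sideBall_subset_sideCell ht (f.neg_openTriangle ▸ hx)

theorem _root_.TriangularConfiguration.IsStrongBoundary.sideCell_ne
    (hC : C.IsStrongBoundary) (ht : t ∈ C.triangles) : f.sideCell ht ≠ f.neg.sideCell ht := by
  intro h
  refine (hC.2 _ (C.eraseTriangle_ssubset ht)).ne ?_
  have hRU : Disjoint f.openTriangle C.spaceᶜ := disjoint_compl_right_iff_subset.2
    (f.openTriangle_subset_convexHull.trans (convexHull_subset_space (mem_triangles.1 ht).1))
  show {X | ∃ x ∈ _, X = _}.ncard = {X | ∃ x ∈ _, X = _}.ncard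
  rw [f.compl_eraseTriangle_space ht]
  exact ncard_components_union_eq C.isClosed_space.isOpen_compl hRU
    ⟨_, f.centroid_mem_openTriangle⟩ (f.sidePoint_mem_compl ht)
    (f.openTriangle_subset_closure_sideCell ht) (f.isOpen_sideCell_union_openTriangle ht h)

theorem sideCell_subset_sideCell (ht : t ∈ Δ.triangles) (htC : t ∈ C.triangles)
    (hCΔ : C.faces ⊆ Δ.faces) : f.sideCell ht ⊆ f.sideCell htC := by
  have hball : f.sideBall ht f.centroid ⊆ f.sideBall htC f.centroid :=
    inter_subset_inter_left _ <| ball_subset_ball <| infDist_le_infDist_of_subset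
      (space_mono (Finset.erase_subset_erase t hCΔ)) (nonempty_eraseTriangle_space htC)
  have hmem := f.sideBall_subset_sideCell htC f.centroid_mem_openTriangle
    (hball (f.sidePoint_mem_sideBall ht))
  refine (connectedComponentIn_mono _ (compl_subset_compl.2 (space_mono hCΔ))).trans ?_
  rw [sideCell, connectedComponentIn_eq hmem]

end TriangleFrame

/-- In a connected triangular configuration `Δ` embedded into `ℝ³`, every
triangle of `Δ` is incident with exactly two cells of `Δ`. -/
theorem triangle_incident_exactly_two_cells (Δ : TriangularConfiguration 3)
    (hΔ : Δ.Connected) (t : Finset (Pt 3)) (ht : t ∈ Δ.triangles) :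
    ∃ X Y : Set (Pt 3), X ≠ Y ∧ Δ.IncidentCell t X ∧ Δ.IncidentCell t Y ∧
      ∀ Z : Set (Pt 3), Δ.IncidentCell t Z → Z = X ∨ Z = Y := by
  obtain ⟨htΔ, hcard⟩ := mem_triangles.1 ht
  obtain ⟨f⟩ := TriangleFrame.nonempty_of_affineIndependent hcard (Δ.indep t htΔ)
  obtain ⟨C, ⟨hC, hCΔ⟩, htC, -⟩ := hΔ t ht t ht
  have htC' : t ∈ C.triangles := mem_triangles.2 ⟨htC, hcard⟩
  refine ⟨f.sideCell ht, f.neg.sideCell ht, fun h => hC.sideCell_ne f htC' ?_,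
    f.incidentCell_sideCell ht, f.neg.incidentCell_sideCell ht,
    fun Z hZ => f.incidentCell_eq_or_eq ht hZ⟩
  have hmem := f.sidePoint_mem_sideCell ht
  exact (f.isCell_sideCell htC').eq_of_mem (f.neg.isCell_sideCell htC')
    (f.sideCell_subset_sideCell ht htC' hCΔ hmem)
    (f.neg.sideCell_subset_sideCell ht htC' hCΔ (h ▸ hmem))
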